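/- Let G : ℝ^d → ℝ and g : ℝ^d → ℝ be continuous and differentiable at all points, and suppose that both G and G + g are λ-strongly convex. If f₁ = argmin_f G(f) and f₂ = argmin_f (G(f) + g(f)), then ‖f₁ − f₂‖₂ ≤ (1/λ) · max_f ‖∇g(f)‖₂. -/
import Mathlib


open Real Set Topology Filter

noncomputable section

abbrev Vec (d : ℕ) := EuclideanSpace ℝ (Fin d)

/-- `lam`-strong convexity. -/
def SConvex {d : ℕ} (lam : ℝ) (H : Vec d → ℝ) : Prop :=
  ∀ α : ℝ, α ∈ Set.Ioo (0 : ℝ) 1 → ∀ f g : Vec d,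
    H (α • f + (1 - α) • g) ≤
      α * H f + (1 - α) * H g - (lam / 2) * α * (1 - α) * ‖f - g‖ ^ 2

/-- A strongly convex function grows at least quadratically away from a minimizer. -/
lemma sconvex_min_lower {d : ℕ} {lam : ℝ} {H : Vec d → ℝ} (hsc : SConvex lam H)
    {fs : Vec d} (hmin : ∀ f, H fs ≤ H f) (f : Vec d) :
    H fs + lam / 2 * ‖f - fs‖ ^ 2 ≤ H f := by
  have key : ∀ α ∈ Set.Ioo (0 : ℝ) 1, lam / 2 * (1 - α) * ‖f - fs‖ ^ 2 ≤ H f - H fs := by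
    intro α hα
    have h1 := hsc α hα f fs
    have h2 := hmin (α • f + (1 - α) • fs)
    have hα0 := hα.1
    have h3 : α * (lam / 2 * (1 - α) * ‖f - fs‖ ^ 2) ≤ α * (H f - H fs) := by nlinarith
    exact le_of_mul_le_mul_left h3 hα0
  have hmem : Set.Ioo (0 : ℝ) 1 ∈ 𝓝[>] (0 : ℝ) :=
    Ioo_mem_nhdsGT_of_mem (by constructor <;> norm_num)
  have ht : Filter.Tendsto (fun α : ℝ => lam / 2 * (1 - α) * ‖f - fs‖ ^ 2) (𝓝[>] (0 : ℝ))
      (𝓝 (lam / 2 * (1 - 0) * ‖f - fs‖ ^ 2)) := by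
    apply Filter.Tendsto.mono_left _ nhdsWithin_le_nhds
    exact (Continuous.tendsto (by continuity) 0)
  have hle : lam / 2 * (1 - 0) * ‖f - fs‖ ^ 2 ≤ H f - H fs :=
    le_of_tendsto ht (Filter.eventually_of_mem hmem key)
  simp at hle
  linarith

/-- Lemma 7: if G and G + g are λ-strongly convex, continuous and
differentiable everywhere, with minimizers f₁ and f₂ respectively, then
‖f₁ − f₂‖ ≤ (1/λ) · max_f ‖∇g(f)‖ (formulated via any uniform bound M on ‖∇g‖). -/
theorem strongly_convex_minimizer_shift
    (d : ℕ) (lam : ℝ) (hlam : 0 < lam)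
    (G g : Vec d → ℝ)
    (hGcont : Continuous G) (hgcont : Continuous g)
    (hGdiff : Differentiable ℝ G) (hgdiff : Differentiable ℝ g)
    (hGsc : SConvex lam G) (hGgsc : SConvex lam (fun f => G f + g f))
    (f₁ f₂ : Vec d)
    (hf₁ : ∀ f, G f₁ ≤ G f)
    (hf₂ : ∀ f, G f₂ + g f₂ ≤ G f + g f)
    (M : ℝ) (hM : ∀ f, ‖gradient g f‖ ≤ M) :
    ‖f₁ - f₂‖ ≤ (1 / lam) * M := by
  set X := ‖f₁ - f₂‖ with hX
  have h1 : G f₁ + lam / 2 * ‖f₂ - f₁‖ ^ 2 ≤ G f₂ := sconvex_min_lower hGsc hf₁ f₂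
  have h2 : (G f₂ + g f₂) + lam / 2 * ‖f₁ - f₂‖ ^ 2 ≤ G f₁ + g f₁ :=
    sconvex_min_lower hGgsc hf₂ f₁
  have hsymm : ‖f₂ - f₁‖ = X := by rw [hX, norm_sub_rev]
  rw [hsymm] at h1
  -- mean value bound on g
  have hfd : ∀ x ∈ (Set.univ : Set (Vec d)), ‖fderiv ℝ g x‖ ≤ M := by
    intro x _
    have : ‖gradient g x‖ = ‖fderiv ℝ g x‖ := by
      rw [gradient]; exact LinearIsometryEquiv.norm_map _ _
    rw [← this]; exact hM x
  have hmv : ‖g f₁ - g f₂‖ ≤ M * ‖f₁ - f₂‖ :=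
    Convex.norm_image_sub_le_of_norm_fderiv_le
      (fun x _ => hgdiff x) hfd convex_univ (Set.mem_univ f₂) (Set.mem_univ f₁)
  have hgd : g f₁ - g f₂ ≤ M * X := le_trans (le_abs_self _) hmv
  have hM0 : 0 ≤ M := le_trans (norm_nonneg _) (hM f₁)
  have hX0 : 0 ≤ X := norm_nonneg _
  have hquad : lam * X ^ 2 ≤ M * X := by nlinarith
  rcases eq_or_lt_of_le hX0 with h0 | h0
  · rw [← h0]; positivity
  · rw [div_mul_eq_mul_div, le_div_iff₀ hlam]
    nlinarith
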